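/- arXiv:math/0112171 — 6 statements merged into one kernel-verified Lean document; each statement's English description precedes it below -/
import Mathlib

section
/- Under the same hypotheses (ZX = q^{-2}XZ, ZY = q^2YZ, q^{-1}XY - qYX = (Z^2-1)/(q-q^{-1}), J = (qX - q^{-1}Y)Z^{-1}), one can recover X and Y from J and Z: X = (qJZ - q^{-1}ZJ)/(q^2 - q^{-2}) and Y = (q^{-1}JZ - qZJ)/(q^2 - q^{-2}). -/
/-!
Since `Z` rescales `X` by `q⁻²` and `Y` by `q²` under conjugation, `JZ = qX - q⁻¹Y` and
`ZJ = q⁻¹X - qY`. This is a `2 × 2` linear system in `X` and `Y` with determinant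
`q⁻² - q² ≠ 0`, and solving it gives the formulas.
-/

section TwistedCommutation

variable {K A : Type*} [CommRing K] [Ring A] [Algebra K A]

theorem mul_smul_sub_smul_of_mul_eq_smul_mul {z x y : A} {c d : K}
    (hx : z * x = c • (x * z)) (hy : z * y = d • (y * z)) (a b : K) :
    z * (a • x - b • y) = ((c * a) • x - (d * b) • y) * z := by
  rw [mul_sub, mul_smul_comm, mul_smul_comm, hx, hy, smul_smul, smul_smul, sub_mul,
    smul_mul_assoc, smul_mul_assoc, mul_comm a, mul_comm b]

end TwistedCommutation

section LinearSystem

variable {K M : Type*} [Field K] [AddCommGroup M] [Module K M] {a b : K}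

theorem inv_smul_smul_sub_smul_eq_left (h : a ^ 2 - b ^ 2 ≠ 0) (x y : M) :
    (a ^ 2 - b ^ 2)⁻¹ • (a • (a • x - b • y) - b • (b • x - a • y)) = x := by
  rw [inv_smul_eq_iff₀ h]
  module

theorem inv_smul_smul_sub_smul_eq_right (h : a ^ 2 - b ^ 2 ≠ 0) (x y : M) :
    (a ^ 2 - b ^ 2)⁻¹ • (b • (a • x - b • y) - a • (b • x - a • y)) = y := by
  rw [inv_smul_eq_iff₀ h]
  module

end LinearSystem

theorem sq_sub_inv_sq_ne_zero {K : Type*} [Field K] {q : K} (hq : q ≠ 0) (hq4 : q ^ 4 ≠ 1) :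
    q ^ 2 - q⁻¹ ^ 2 ≠ 0 := by
  have : q ^ 2 - q⁻¹ ^ 2 = q⁻¹ ^ 2 * (q ^ 4 - 1) := by field_simp
  rw [this]
  exact mul_ne_zero (by positivity) (sub_ne_zero.mpr hq4)

theorem stmt_3_general {K A : Type*} [Field K] [Ring A] [Algebra K A]
    (q : K) (hq : q ≠ 0) (hq4 : q ^ 4 ≠ 1)
    (X Y : A) (Z : Aˣ)
    (h1 : (Z : A) * X = (q⁻¹ ^ 2) • (X * (Z : A)))
    (h2 : (Z : A) * Y = (q ^ 2) • (Y * (Z : A)))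
    (J : A) (hJ : J = (q • X - q⁻¹ • Y) * ((Z⁻¹ : Aˣ) : A)) :
    X = (q ^ 2 - q⁻¹ ^ 2)⁻¹ • (q • (J * (Z : A)) - q⁻¹ • ((Z : A) * J)) ∧
    Y = (q ^ 2 - q⁻¹ ^ 2)⁻¹ • (q⁻¹ • (J * (Z : A)) - q • ((Z : A) * J)) := by
  have hJZ : J * Z = q • X - q⁻¹ • Y := by rw [hJ, Units.inv_mul_cancel_right]
  have hZJ : Z * J = q⁻¹ • X - q • Y := by
    have hscalars : q⁻¹ ^ 2 * q = q⁻¹ ∧ q ^ 2 * q⁻¹ = q := by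
      constructor <;> field_simp
    rw [hJ, ← mul_assoc, mul_smul_sub_smul_of_mul_eq_smul_mul h1 h2, hscalars.1, hscalars.2,
      Units.mul_inv_cancel_right]
  have hdet := sq_sub_inv_sq_ne_zero hq hq4
  rw [hJZ, hZJ]
  exact ⟨(inv_smul_smul_sub_smul_eq_left hdet X Y).symm,
    (inv_smul_smul_sub_smul_eq_right hdet X Y).symm⟩

/-- Recovering `X` and `Y` from `J` and `Z`. -/
theorem stmt_3 {K A : Type*} [Field K] [Ring A] [Algebra K A]
    (q : K) (hq : q ≠ 0) (hq4 : q ^ 4 ≠ 1)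
    (X Y : A) (Z : Aˣ)
    (h1 : (Z : A) * X = (q⁻¹ ^ 2) • (X * (Z : A)))
    (h2 : (Z : A) * Y = (q ^ 2) • (Y * (Z : A)))
    (h3 : q⁻¹ • (X * Y) - q • (Y * X) = (q - q⁻¹)⁻¹ • ((Z : A) ^ 2 - 1))
    (J : A) (hJ : J = (q • X - q⁻¹ • Y) * ((Z⁻¹ : Aˣ) : A)) :
    X = (q ^ 2 - q⁻¹ ^ 2)⁻¹ • (q • (J * (Z : A)) - q⁻¹ • ((Z : A) * J)) ∧
    Y = (q ^ 2 - q⁻¹ ^ 2)⁻¹ • (q⁻¹ • (J * (Z : A)) - q • ((Z : A) * J)) :=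
  stmt_3_general q hq hq4 X Y Z h1 h2 J hJ
end

section
/- Let A be an associative unital algebra, q a unit scalar with q^4 ≠ 1, and X, Y, Z ∈ A satisfying the quantum sl(2) relations ZX = q^{-2}XZ, ZY = q^2YZ, q^{-1}XY - qYX = (Z^2-1)/(q - q^{-1}), with Z invertible. Set J = (qX - q^{-1}Y)Z^{-1}. Then Z^2 J - (q^2 + q^{-2}) Z J Z + J Z^2 = 0. -/
/-- Relation (i): `Z²J - (q² + q⁻²) ZJZ + JZ² = 0`. -/
theorem stmt_4 {K A : Type*} [Field K] [Ring A] [Algebra K A]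
    (q : K) (hq : q ≠ 0) (hq4 : q ^ 4 ≠ 1)
    (X Y : A) (Z : Aˣ)
    (h1 : (Z : A) * X = (q⁻¹ ^ 2) • (X * (Z : A)))
    (h2 : (Z : A) * Y = (q ^ 2) • (Y * (Z : A)))
    (h3 : q⁻¹ • (X * Y) - q • (Y * X) = (q - q⁻¹)⁻¹ • ((Z : A) ^ 2 - 1))
    (J : A) (hJ : J = (q • X - q⁻¹ • Y) * ((Z⁻¹ : Aˣ) : A)) :
    (Z : A) ^ 2 * J - (q ^ 2 + q⁻¹ ^ 2) • ((Z : A) * J * (Z : A)) + J * (Z : A) ^ 2 = 0 := by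
  have hzz : ((Z⁻¹ : Aˣ) : A) * (Z : A) = 1 := Z.inv_mul
  have hJZ : J * (Z : A) = q • X - q⁻¹ • Y := by
    rw [hJ, mul_assoc, hzz, mul_one]
  have hZJ : (Z : A) * J = q⁻¹ • X - q • Y := by
    rw [hJ, ← mul_assoc, mul_sub, mul_smul_comm, mul_smul_comm, h1, h2,
      smul_smul, smul_smul, sub_mul, smul_mul_assoc, smul_mul_assoc,
      mul_assoc X, mul_assoc Y, Z.mul_inv, mul_one, mul_one]
    congr 1 <;> [skip; skip] <;> congr 1 <;> field_simp <;> ring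
  have hZ2J : (Z : A) ^ 2 * J = (q⁻¹ * q⁻¹ ^ 2) • (X * Z) - (q * q ^ 2) • (Y * Z) := by
    rw [sq, mul_assoc, hZJ, mul_sub, mul_smul_comm, mul_smul_comm, h1, h2,
      smul_smul, smul_smul]
  have hZJZ : (Z : A) * J * (Z : A) = q⁻¹ • (X * Z) - q • (Y * Z) := by
    rw [hZJ, sub_mul, smul_mul_assoc, smul_mul_assoc]
  have hJZ2 : J * (Z : A) ^ 2 = q • (X * Z) - q⁻¹ • (Y * Z) := by
    rw [sq, ← mul_assoc, hJZ, sub_mul, smul_mul_assoc, smul_mul_assoc]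
  rw [hZ2J, hZJZ, hJZ2]
  match_scalars <;> field_simp <;> ring
end

section
/- Under the same hypotheses, the element J = (qX - q^{-1}Y)Z^{-1} satisfies (q^2 + 1 + q^{-2})·Z J^2 Z - J Z J Z - J Z^2 J - Z J Z J = (q + q^{-1})^2 (Z^2 - 1). -/
/-- Relation (ii): `(q²+1+q⁻²) ZJ²Z - JZJZ - JZ²J - ZJZJ = (q+q⁻¹)²(Z²-1)`. -/
theorem stmt_5 {K A : Type*} [Field K] [Ring A] [Algebra K A]
    (q : K) (hq : q ≠ 0) (hq4 : q ^ 4 ≠ 1)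
    (X Y : A) (Z : Aˣ)
    (h1 : (Z : A) * X = (q⁻¹ ^ 2) • (X * (Z : A)))
    (h2 : (Z : A) * Y = (q ^ 2) • (Y * (Z : A)))
    (h3 : q⁻¹ • (X * Y) - q • (Y * X) = (q - q⁻¹)⁻¹ • ((Z : A) ^ 2 - 1))
    (J : A) (hJ : J = (q • X - q⁻¹ • Y) * ((Z⁻¹ : Aˣ) : A)) :
    (q ^ 2 + 1 + q⁻¹ ^ 2) • ((Z : A) * J ^ 2 * (Z : A))
      - J * (Z : A) * J * (Z : A) - J * (Z : A) ^ 2 * J - (Z : A) * J * (Z : A) * J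
      = ((q + q⁻¹) ^ 2) • ((Z : A) ^ 2 - 1) := by
  have hqd : q - q⁻¹ ≠ 0 := by
    intro h
    apply hq4
    have : q * q = 1 := by
      have := sub_eq_zero.mp h
      field_simp at this
      linear_combination this
    calc q ^ 4 = (q * q) * (q * q) := by ring
    _ = 1 := by rw [this, one_mul]
  have hJZ : J * (Z : A) = q • X - q⁻¹ • Y := by
    rw [hJ, mul_assoc, Units.inv_mul, mul_one]
  have hZJ : (Z : A) * J = q⁻¹ • X - q • Y := by
    have key : (Z : A) * (q • X - q⁻¹ • Y) = (q⁻¹ • X - q • Y) * (Z : A) := by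
      rw [mul_sub, sub_mul, mul_smul_comm, mul_smul_comm, h1, h2,
        smul_smul, smul_smul, smul_mul_assoc, smul_mul_assoc]
      congr 2 <;> field_simp <;> ring
    rw [hJ, ← mul_assoc, key, mul_assoc, Units.mul_inv, mul_one]
  have hZ2 : ((Z : A) ^ 2 - 1) = (q - q⁻¹) • (q⁻¹ • (X * Y) - q • (Y * X)) := by
    rw [h3, smul_smul, mul_inv_cancel₀ hqd, one_smul]
  have e1 : (Z : A) * J ^ 2 * (Z : A) = ((Z : A) * J) * (J * (Z : A)) := by
    rw [sq]; noncomm_ring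
  have e2 : J * (Z : A) * J * (Z : A) = (J * (Z : A)) * (J * (Z : A)) := by
    noncomm_ring
  have e3 : J * (Z : A) ^ 2 * J = (J * (Z : A)) * ((Z : A) * J) := by
    rw [sq]; noncomm_ring
  have e4 : (Z : A) * J * (Z : A) * J = ((Z : A) * J) * ((Z : A) * J) := by
    noncomm_ring
  rw [e1, e2, e3, e4, hJZ, hZJ, hZ2]
  simp only [smul_sub, sub_mul, mul_sub, smul_mul_assoc, mul_smul_comm, smul_smul]
  match_scalars <;> field_simp <;> ring
end

section
/- Let A be an associative unital algebra over a field containing a unit q, and let Z, J ∈ A with Z invertible satisfy the two relations: (i) Z^2 J - (q^2+q^{-2}) Z J Z + J Z^2 = 0, and (ii) (q^2+1+q^{-2}) Z J^2 Z - J Z J Z - J Z^2 J - Z J Z J = (q+q^{-1})^2 (Z^2 - 1). Define V = Z J^3 Z - (q+q^{-1})^2 Z J Z + (q+q^{-1})^2 J - J Z J Z J. Then Z V + V Z = 0. -/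
/-- `ZV + VZ = 0` for `V = ZJ³Z - [2]²ZJZ + [2]²J - JZJZJ`. -/
theorem stmt_6 {K A : Type*} [Field K] [Ring A] [Algebra K A]
    (q : K) (hq : q ≠ 0)
    (Z : Aˣ) (J : A)
    (h1 : (Z : A) ^ 2 * J - (q ^ 2 + q⁻¹ ^ 2) • ((Z : A) * J * (Z : A)) + J * (Z : A) ^ 2 = 0)
    (h2 : (q ^ 2 + 1 + q⁻¹ ^ 2) • ((Z : A) * J ^ 2 * (Z : A))
        - J * (Z : A) * J * (Z : A) - J * (Z : A) ^ 2 * J - (Z : A) * J * (Z : A) * J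
        = ((q + q⁻¹) ^ 2) • ((Z : A) ^ 2 - 1))
    (V : A)
    (hV : V = (Z : A) * J ^ 3 * (Z : A) - ((q + q⁻¹) ^ 2) • ((Z : A) * J * (Z : A))
        + ((q + q⁻¹) ^ 2) • J - J * (Z : A) * J * (Z : A) * J) :
    (Z : A) * V + V * (Z : A) = 0 := by
  have hβ : (q ^ 2 + 1 + q⁻¹ ^ 2) = (q ^ 2 + q⁻¹ ^ 2) + 1 := by ring
  rw [hβ, add_smul, one_smul] at h2
  have h2' : (q ^ 2 + q⁻¹ ^ 2) • ((Z : A) * J ^ 2 * (Z : A)) + (Z : A) * J ^ 2 * (Z : A)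
      - J * (Z : A) * J * (Z : A) - J * (Z : A) ^ 2 * J - (Z : A) * J * (Z : A) * J
      - ((q + q⁻¹) ^ 2) • (Z : A) ^ 2 + ((q + q⁻¹) ^ 2) • (1 : A) = 0 := by
    rw [h2, smul_sub]; abel
  have key : (Z : A) * V + V * (Z : A) =
      ((Z : A) ^ 2 * J - (q ^ 2 + q⁻¹ ^ 2) • ((Z : A) * J * (Z : A)) + J * (Z : A) ^ 2)
          * (J ^ 2 * (Z : A))
      + ((q ^ 2 + q⁻¹ ^ 2) • ((Z : A) * J ^ 2 * (Z : A)) + (Z : A) * J ^ 2 * (Z : A)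
          - J * (Z : A) * J * (Z : A) - J * (Z : A) ^ 2 * J - (Z : A) * J * (Z : A) * J
          - ((q + q⁻¹) ^ 2) • (Z : A) ^ 2 + ((q + q⁻¹) ^ 2) • (1 : A)) * (J * (Z : A))
      + ((Z : A) * J)
          * ((q ^ 2 + q⁻¹ ^ 2) • ((Z : A) * J ^ 2 * (Z : A)) + (Z : A) * J ^ 2 * (Z : A)
          - J * (Z : A) * J * (Z : A) - J * (Z : A) ^ 2 * J - (Z : A) * J * (Z : A) * J
          - ((q + q⁻¹) ^ 2) • (Z : A) ^ 2 + ((q + q⁻¹) ^ 2) • (1 : A))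
      + ((Z : A) * J ^ 2)
          * ((Z : A) ^ 2 * J - (q ^ 2 + q⁻¹ ^ 2) • ((Z : A) * J * (Z : A)) + J * (Z : A) ^ 2) := by
    subst hV
    noncomm_ring
  rw [key, h1, h2', mul_zero, mul_zero, zero_mul, zero_mul]
  abel
end

section
/- Let q = exp(2πi P/Q) with Q odd, gcd(P,Q)=1, and λ, a, b ∈ ℂ with λ ≠ 0. On ℂ^Q with basis v_0,...,v_{Q-1}, define Z v_j = λ q^{2j} v_j; X v_j = -i q^{j-1}(ab - [j]_q (λ q^{j-1} - λ^{-1} q^{-j+1})/(q - q^{-1})) v_{j-1} for j ≠ 0, X v_0 = -i q^{-1} a v_{Q-1}; Y v_j = -i λ q^{j+1} v_{j+1} for j ≠ Q-1, Y v_{Q-1} = -i λ b v_0. Then ZX = q^{-2} XZ and ZY = q^2 YZ. -/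
/-!
`Z` is diagonal with eigenvalue `λ q^{2j}` on `v_j`, while `X` lowers and `Y` raises the index by
one, cyclically modulo `Q`. Conjugating a matrix supported on such a cyclic shift by the diagonal
`Z` therefore multiplies it by `q^{∓2}`; the wrap-around entries behave the same way because
`q^Q = 1`. Only the supports of `X` and `Y` matter, not their coefficients.
-/

open Matrix

def IsCyclicSucc {n : ℕ} (i j : Fin n) : Prop :=
  (i : ℕ) + 1 = j ∨ (i : ℕ) = n - 1 ∧ (j : ℕ) = 0

theorem pow_val_of_isCyclicSucc {M : Type*} [Monoid M] {q : M} {n : ℕ} (hq : q ^ n = 1)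
    {i j : Fin n} (h : IsCyclicSucc i j) : q ^ (j : ℕ) = q * q ^ (i : ℕ) := by
  rcases h with h | ⟨hi, hj⟩
  · rw [← h, pow_succ']
  · have hn : n = (i : ℕ) + 1 := by omega
    rw [hj, pow_zero, ← pow_succ', ← hn, hq]

theorem Matrix.diagonal_mul_eq_smul_mul_diagonal {n R : Type*} [Fintype n] [DecidableEq n]
    [CommSemiring R] {d : n → R} {M : Matrix n n R} {c : R}
    (h : ∀ i j, M i j ≠ 0 → d i = c * d j) : diagonal d * M = c • (M * diagonal d) := by
  ext i j
  rw [diagonal_mul, smul_apply, mul_diagonal, smul_eq_mul]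
  by_cases hM : M i j = 0
  · simp [hM]
  · rw [h i j hM]; ring

theorem Complex.exp_two_pi_I_mul_div_pow_self (k n : ℕ) :
    exp (2 * Real.pi * I * k / n) ^ n = 1 := by
  rcases eq_or_ne n 0 with rfl | hn
  · exact pow_zero _
  · rw [← exp_nat_mul, ← exp_nat_mul_two_pi_mul_I k]
    congr 1
    field_simp

theorem stmt_12_general (P Q : ℕ)
    (q : ℂ) (hq : q = Complex.exp (2 * Real.pi * Complex.I * P / Q))
    (l a b : ℂ)
    (Z X Y : Matrix (Fin Q) (Fin Q) ℂ)
    (hZ : ∀ i j, Z i j = if i = j then l * q ^ (2 * (j : ℤ)) else 0)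
    (hX : ∀ i j, X i j =
      if (j : ℕ) ≠ 0 ∧ (i : ℕ) + 1 = (j : ℕ) then
        -Complex.I * q ^ ((j : ℤ) - 1)
          * (a * b - ((q ^ (j : ℤ) - q ^ (-(j : ℤ))) / (q - q⁻¹))
              * ((l * q ^ ((j : ℤ) - 1) - l⁻¹ * q ^ (-(j : ℤ) + 1)) / (q - q⁻¹)))
      else if (j : ℕ) = 0 ∧ (i : ℕ) = Q - 1 then -Complex.I * q⁻¹ * a
      else 0)
    (hY : ∀ i j, Y i j =
      if (j : ℕ) ≠ Q - 1 ∧ (i : ℕ) = (j : ℕ) + 1 then -Complex.I * l * q ^ ((j : ℤ) + 1)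
      else if (j : ℕ) = Q - 1 ∧ (i : ℕ) = 0 then -Complex.I * l * b
      else 0) :
    Z * X = (q ^ (-2 : ℤ)) • (X * Z) ∧ Z * Y = (q ^ (2 : ℤ)) • (Y * Z) := by
  have hq0 : q ≠ 0 := hq ▸ Complex.exp_ne_zero _
  have hq2 : (q ^ 2) ^ Q = 1 := by
    rw [← pow_mul', pow_mul, hq, Complex.exp_two_pi_I_mul_div_pow_self, one_pow]
  have hZd : Z = diagonal fun j : Fin Q => l * (q ^ 2) ^ (j : ℕ) := by
    ext i j
    rw [hZ, diagonal_apply, _root_.zpow_mul, zpow_natCast]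
    split_ifs with h
    exacts [h ▸ rfl, rfl]
  have hXsupp : ∀ i j, X i j ≠ 0 → IsCyclicSucc i j := by
    intro i j hne
    rw [hX] at hne
    split_ifs at hne with h₁ h₂
    exacts [.inl h₁.2, .inr ⟨h₂.2, h₂.1⟩, absurd rfl hne]
  have hYsupp : ∀ i j, Y i j ≠ 0 → IsCyclicSucc j i := by
    intro i j hne
    rw [hY] at hne
    split_ifs at hne with h₁ h₂
    exacts [.inl h₁.2.symm, .inr ⟨h₂.1, h₂.2⟩, absurd rfl hne]
  rw [hZd]
  constructor
  · refine diagonal_mul_eq_smul_mul_diagonal fun i j hne => ?_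
    rw [pow_val_of_isCyclicSucc hq2 (hXsupp i j hne)]
    field_simp
  · refine diagonal_mul_eq_smul_mul_diagonal fun i j hne => ?_
    rw [pow_val_of_isCyclicSucc hq2 (hYsupp i j hne), zpow_ofNat]
    ring

/-- The second (cyclic) family of representations satisfies `ZX = q⁻²XZ` and `ZY = q²YZ`. -/
theorem stmt_12 (P Q : ℕ) (hQpos : 0 < Q) (hQodd : Odd Q) (hcop : Nat.Coprime P Q)
    (q : ℂ) (hq : q = Complex.exp (2 * Real.pi * Complex.I * P / Q))
    (l a b : ℂ) (hl : l ≠ 0)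
    (Z X Y : Matrix (Fin Q) (Fin Q) ℂ)
    (hZ : ∀ i j, Z i j = if i = j then l * q ^ (2 * (j : ℤ)) else 0)
    (hX : ∀ i j, X i j =
      if (j : ℕ) ≠ 0 ∧ (i : ℕ) + 1 = (j : ℕ) then
        -Complex.I * q ^ ((j : ℤ) - 1)
          * (a * b - ((q ^ (j : ℤ) - q ^ (-(j : ℤ))) / (q - q⁻¹))
              * ((l * q ^ ((j : ℤ) - 1) - l⁻¹ * q ^ (-(j : ℤ) + 1)) / (q - q⁻¹)))
      else if (j : ℕ) = 0 ∧ (i : ℕ) = Q - 1 then -Complex.I * q⁻¹ * a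
      else 0)
    (hY : ∀ i j, Y i j =
      if (j : ℕ) ≠ Q - 1 ∧ (i : ℕ) = (j : ℕ) + 1 then -Complex.I * l * q ^ ((j : ℤ) + 1)
      else if (j : ℕ) = Q - 1 ∧ (i : ℕ) = 0 then -Complex.I * l * b
      else 0) :
    Z * X = (q ^ (-2 : ℤ)) • (X * Z) ∧ Z * Y = (q ^ (2 : ℤ)) • (Y * Z) :=
  stmt_12_general P Q q hq l a b Z X Y hZ hX hY
end

section
/- Let A be an associative unital algebra over ℂ, q a root of unity, and suppose Z, J ∈ A (Z invertible) satisfy the main identity Z(J - [x+2]_q)(J - [x]_q)(J - [x-2]_q)Z = ((J-[x]_q)Z(J-[x]_q)Z - [2]_q^2)(J-[x]_q) for a given x. If ρ : A → End(V) is a representation and v ∈ V is an eigenvector of ρ(J) with eigenvalue [x]_q, then the vector w = (ρ(J) - [x]_q)(ρ(J) - [x-2]_q)ρ(Z)·v satisfies ρ(J)·w = [x+2]_q · w, i.e. w is either zero or an eigenvector of ρ(J) with eigenvalue [x+2]_q. -/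
/-- Raising operator: if `ρ(J) v = [x]_q v` then
`w = (ρ(J)-[x])(ρ(J)-[x-2])ρ(Z) v` satisfies `ρ(J) w = [x+2]_q w`. -/
theorem stmt_13 {A : Type*} [Ring A] [Algebra ℂ A]
    (q : ℂ) (hq : ∃ n : ℕ, 0 < n ∧ q ^ n = 1)
    (Z : Aˣ) (J : A)
    (μ α β : ℂ)
    (hsum : α + β = (q ^ 2 + q⁻¹ ^ 2) * μ)
    (hprod : α * β = μ ^ 2 - (q + q⁻¹) ^ 2)
    (hmain : (Z : A) * (J - algebraMap ℂ A α) * (J - algebraMap ℂ A μ)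
          * (J - algebraMap ℂ A β) * (Z : A)
        = ((J - algebraMap ℂ A μ) * (Z : A) * (J - algebraMap ℂ A μ) * (Z : A)
            - algebraMap ℂ A ((q + q⁻¹) ^ 2)) * (J - algebraMap ℂ A μ))
    {V : Type*} [AddCommGroup V] [Module ℂ V]
    (ρ : A →ₐ[ℂ] Module.End ℂ V)
    (v : V) (hv : ρ J v = μ • v)
    (w : V)
    (hw : w = ((ρ J - μ • 1) * (ρ J - β • 1) * ρ (Z : A)) v) :
    ρ J w = α • w := by
  have hNv : (ρ J - μ • (1 : Module.End ℂ V)) v = 0 := by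
    simp [LinearMap.sub_apply, hv]
  have halg : ∀ c : ℂ, ρ (J - algebraMap ℂ A c) = ρ J - c • 1 := by
    intro c
    rw [map_sub, AlgHom.commutes]
    rfl
  have key := congrArg ρ hmain
  simp only [map_mul, map_sub, halg, AlgHom.commutes] at key
  have key2 := congrArg (fun f : Module.End ℂ V => f v) key
  simp only [Module.End.mul_apply] at key2
  rw [hNv] at key2
  simp only [map_zero, LinearMap.sub_apply, LinearMap.zero_apply] at key2
  -- key2 : ρ Z ((ρJ - α•1) ((ρJ - μ•1) ((ρJ - β•1) (ρ Z v)))) = 0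
  have hcancel : (ρ J - α • 1) ((ρ J - μ • 1) ((ρ J - β • 1) (ρ (Z : A) v))) = 0 := by
    have h3 := congrArg (ρ ((↑Z⁻¹ : A))) key2
    rw [← Module.End.mul_apply, ← map_mul] at h3
    simpa using h3
  have hw' : w = (ρ J - μ • 1) ((ρ J - β • 1) (ρ (Z : A) v)) := by
    rw [hw]; simp [Module.End.mul_apply]
  have : (ρ J - α • (1 : Module.End ℂ V)) w = 0 := by rw [hw']; exact hcancel
  have := sub_eq_zero.mp (by simpa [LinearMap.sub_apply] using this)
  simpa using this
end
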